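/- arXiv:2110.10759 — 2 statements merged into one kernel-verified Lean document; each statement's English description precedes it below -/
import Mathlib

section
/- Let $n \ge 1$, let $\beta \in (0,1]$, and let $\delta \in [0,1]$ with $\delta n$ an integer. Define $q_i = (1-\beta)/n + \beta(2i-1)/n^2$ for $i \in [n]$ (the $(1+\beta)$-process distribution) and $p_i = 1/n - \beta(1-\delta)/n$ for $i \le \delta n$, $p_i = 1/n + \beta\delta/n$ for $i > \delta n$. Then $\sum_{i=1}^{\delta n} q_i = \sum_{i=1}^{\delta n} p_i = \delta - \beta(\delta - \delta^2)$, and hence $p$ majorizes $q$, i.e. $\sum_{i=1}^k q_i \le \sum_{i=1}^k p_i$ for all $1 \le k \le n$. -/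
/-- The `(1+β)`-process distribution `q` is majorized by the two-level
distribution `p` of the `(1+η)`-MeanThinning process with `η = β`. -/
theorem stmt_14 (n : ℕ) (hn : 1 ≤ n) (β : ℝ) (hβ0 : 0 < β) (hβ1 : β ≤ 1)
    (d : ℕ) (hd : d ≤ n) (δ : ℝ) (hδ : δ = (d : ℝ) / n)
    (q p : ℕ → ℝ)
    (hq : ∀ i, q i = (1 - β) / n + β * (2 * (i : ℝ) - 1) / (n : ℝ) ^ 2)
    (hp : ∀ i, p i = if i ≤ d then 1 / n - β * (1 - δ) / n
      else 1 / n + β * δ / n) :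
    (∑ i ∈ Finset.Icc 1 d, q i = δ - β * (δ - δ ^ 2)) ∧
    (∑ i ∈ Finset.Icc 1 d, p i = δ - β * (δ - δ ^ 2)) ∧
    (∀ k, 1 ≤ k → k ≤ n →
      ∑ i ∈ Finset.Icc 1 k, q i ≤ ∑ i ∈ Finset.Icc 1 k, p i) := by
  have hnpos : (0:ℝ) < n := by exact_mod_cast Nat.lt_of_lt_of_le Nat.zero_lt_one hn
  have hn0 : (n:ℝ) ≠ 0 := ne_of_gt hnpos
  -- closed form for prefix sums of q
  have hq' : ∀ k : ℕ, ∑ i ∈ Finset.Icc 1 k, q i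
      = (k:ℝ) * (1 - β) / n + β * (k:ℝ) ^ 2 / (n:ℝ) ^ 2 := by
    intro k
    induction k with
    | zero => simp
    | succ k ih =>
      rw [Finset.sum_Icc_succ_top (Nat.le_add_left 1 k), ih, hq]
      push_cast
      field_simp
      ring
  -- prefix sums of p for k ≤ d
  have hplow : ∀ k : ℕ, k ≤ d → ∑ i ∈ Finset.Icc 1 k, p i
      = (k:ℝ) * (1 / n - β * (1 - δ) / n) := by
    intro k hk
    have hcongr : ∀ i ∈ Finset.Icc 1 k, p i = 1 / n - β * (1 - δ) / n := by
      intro i hi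
      rw [hp, if_pos (le_trans (Finset.mem_Icc.mp hi).2 hk)]
    rw [Finset.sum_congr rfl hcongr, Finset.sum_const, Nat.card_Icc]
    simp [nsmul_eq_mul]
  have h1 : ∑ i ∈ Finset.Icc 1 d, q i = δ - β * (δ - δ ^ 2) := by
    rw [hq', hδ]; field_simp; ring
  have h2 : ∑ i ∈ Finset.Icc 1 d, p i = δ - β * (δ - δ ^ 2) := by
    rw [hplow d le_rfl, hδ]; field_simp
  refine ⟨h1, h2, fun k hk1 hkn => ?_⟩
  rcases le_or_gt k d with hkd | hdk
  · -- k ≤ d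
    rw [hq', hplow k hkd, hδ]
    have hkdR : (k:ℝ) ≤ d := by exact_mod_cast hkd
    have hk0 : (0:ℝ) ≤ k := Nat.cast_nonneg k
    have e : (k:ℝ) * (1 / n - β * (1 - (d:ℝ)/n) / n)
        - ((k:ℝ) * (1 - β) / n + β * (k:ℝ) ^ 2 / (n:ℝ) ^ 2)
        = β * k * ((d:ℝ) - k) / (n:ℝ) ^ 2 := by
      field_simp
      ring
    have hpos : (0:ℝ) ≤ β * k * ((d:ℝ) - k) / (n:ℝ) ^ 2 :=
      div_nonneg (mul_nonneg (mul_nonneg (le_of_lt hβ0) hk0) (by linarith))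
        (by positivity)
    linarith [e, hpos]
  · -- d < k
    have hsplit : ∑ i ∈ Finset.Icc 1 k, p i
        = ∑ i ∈ Finset.Icc 1 d, p i + ∑ i ∈ Finset.Ioc d k, p i := by
      have h : Finset.Icc 1 k = Finset.Ioc 0 k := rfl
      rw [h, ← Finset.sum_Ioc_consecutive _ (Nat.zero_le d) (le_of_lt hdk)]
      rfl
    have hhigh : ∑ i ∈ Finset.Ioc d k, p i = ((k:ℝ) - d) * (1 / n + β * δ / n) := by
      have hcongr : ∀ i ∈ Finset.Ioc d k, p i = 1 / n + β * δ / n := by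
        intro i hi
        rw [hp, if_neg (not_le.mpr (Finset.mem_Ioc.mp hi).1)]
      rw [Finset.sum_congr rfl hcongr, Finset.sum_const, Nat.card_Ioc]
      have hc : ((k - d : ℕ) : ℝ) = (k:ℝ) - d := by
        push_cast [Nat.cast_sub (le_of_lt hdk)]; ring
      simp [nsmul_eq_mul, hc]
      ring
    rw [hq', hsplit, h2, hhigh, hδ]
    have hkR : (k:ℝ) ≤ n := by exact_mod_cast hkn
    have hdkR : (d:ℝ) ≤ k := by exact_mod_cast le_of_lt hdk
    have e : ((d:ℝ)/n - β * ((d:ℝ)/n - ((d:ℝ)/n) ^ 2)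
          + ((k:ℝ) - d) * (1 / n + β * ((d:ℝ)/n) / n))
        - ((k:ℝ) * (1 - β) / n + β * (k:ℝ) ^ 2 / (n:ℝ) ^ 2)
        = β * ((n:ℝ) - k) * ((k:ℝ) - d) / (n:ℝ) ^ 2 := by
      field_simp
      ring
    have hpos : (0:ℝ) ≤ β * ((n:ℝ) - k) * ((k:ℝ) - d) / (n:ℝ) ^ 2 :=
      div_nonneg (mul_nonneg (mul_nonneg (le_of_lt hβ0) (by linarith)) (by linarith))
        (by positivity)
    linarith [e, hpos]
end

section
/- Consider the quadratic potential $\Upsilon(y) = \sum_{i=1}^n y_i^2$ for a normalized load vector $y$ with $\sum_i y_i = 0$. Suppose bin $i$ is chosen with probability $p_i$, and if $y_i \ge 0$ a weight $w_+$ is added to bin $i$, otherwise $w_-$, followed by subtracting the added weight divided by $n$ from every coordinate. Let $P_+ = \sum_{i: y_i \ge 0} p_i$, $P_- = \sum_{i: y_i < 0} p_i$, $p_+ = \max_{i: y_i \ge 0} p_i$, $p_- = \min_{i: y_i < 0} p_i$, and $\Delta = \sum_i |y_i|$. If $p_+ \le 1/n \le p_-$ and $1 \le w_+ \le w_-$,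 then the expected new quadratic potential satisfies $\mathbb{E}[\Upsilon'] \le \Upsilon - (p_- w_- - p_+ w_+)\Delta + 4 w_-^2$. -/
/-- Expected drop of the quadratic potential in one round of a non-filling
process: `𝔼[Υ'] ≤ Υ - (p₋ w₋ - p₊ w₊) Δ + 4 w₋²`. -/
theorem stmt_15 (n : ℕ) (hn : 1 ≤ n) (y : Fin n → ℝ) (hsum : ∑ i, y i = 0)
    (p : Fin n → ℝ) (hp0 : ∀ i, 0 ≤ p i) (hp1 : ∑ i, p i = 1)
    (wp wm : ℝ) (hwp : 1 ≤ wp) (hw : wp ≤ wm)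
    (hBp : (Finset.univ.filter (fun i : Fin n => 0 ≤ y i)).Nonempty)
    (hBm : (Finset.univ.filter (fun i : Fin n => y i < 0)).Nonempty)
    (hpp : (Finset.univ.filter (fun i : Fin n => 0 ≤ y i)).sup' hBp p ≤ 1 / n)
    (hpm : (1 : ℝ) / n ≤ (Finset.univ.filter (fun i : Fin n => y i < 0)).inf' hBm p) :
    (∑ i, p i * ∑ j, (y j +
        (if j = i then (if 0 ≤ y i then wp else wm) * (1 - 1 / n)
         else -(if 0 ≤ y i then wp else wm) / n)) ^ 2)
      ≤ (∑ i, (y i) ^ 2)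
        - (((Finset.univ.filter (fun i : Fin n => y i < 0)).inf' hBm p) * wm
            - ((Finset.univ.filter (fun i : Fin n => 0 ≤ y i)).sup' hBp p) * wp)
          * (∑ i, |y i|)
        + 4 * wm ^ 2 := by
  have hNpos : (0:ℝ) < (n:ℝ) := by exact_mod_cast hn
  have hNne : (n:ℝ) ≠ 0 := ne_of_gt hNpos
  have hN1 : (1:ℝ) ≤ (n:ℝ) := by exact_mod_cast hn
  set a := (Finset.univ.filter (fun i : Fin n => 0 ≤ y i)).sup' hBp p with ha
  set b := (Finset.univ.filter (fun i : Fin n => y i < 0)).inf' hBm p with hb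
  set Δ := ∑ i, |y i| with hΔ
  set Υ := ∑ i, (y i)^2 with hΥ
  have hwp0 : (0:ℝ) < wp := lt_of_lt_of_le one_pos hwp
  have hwm0 : (0:ℝ) < wm := lt_of_lt_of_le hwp0 hw
  -- key per-choice identity
  have key : ∀ (i : Fin n) (w : ℝ),
      ∑ j, (y j + (if j = i then w * (1 - 1/(n:ℝ)) else -w/(n:ℝ)))^2
        = Υ + 2*w*(y i) + w^2*(1 - 1/(n:ℝ)) := by
    intro i w
    have h1 : ∀ j : Fin n,
        (y j + (if j = i then w * (1 - 1/(n:ℝ)) else -w/(n:ℝ)))^2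
          = (y j)^2 + (2*w)*(if j = i then y j else 0) + (-(2*w/(n:ℝ)))*(y j)
            + (w^2*(1 - 2/(n:ℝ)))*(if j = i then (1:ℝ) else 0) + w^2/(n:ℝ)^2 := by
      intro j
      by_cases h : j = i
      · simp only [if_pos h]; field_simp; ring
      · simp only [if_neg h]; field_simp; ring
    rw [Finset.sum_congr rfl (fun j _ => h1 j)]
    rw [Finset.sum_add_distrib, Finset.sum_add_distrib, Finset.sum_add_distrib,
      Finset.sum_add_distrib, ← Finset.mul_sum, ← Finset.mul_sum, ← Finset.mul_sum,
      Finset.sum_ite_eq' Finset.univ i y, Finset.sum_ite_eq' Finset.univ i (fun _ => (1:ℝ)),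
      hsum, Finset.sum_const, Finset.card_univ, Fintype.card_fin]
    simp only [Finset.mem_univ, if_true, nsmul_eq_mul]
    field_simp
    ring
  -- rewrite the LHS
  have step1 : (∑ i, p i * ∑ j, (y j +
        (if j = i then (if 0 ≤ y i then wp else wm) * (1 - 1 / n)
         else -(if 0 ≤ y i then wp else wm) / n)) ^ 2)
      = Υ + 2 * (∑ i, p i * ((if 0 ≤ y i then wp else wm) * y i))
          + (∑ i, p i * (if 0 ≤ y i then wp else wm)^2) * (1 - 1/(n:ℝ)) := by
    have : ∀ i : Fin n, p i * ∑ j, (y j +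
        (if j = i then (if 0 ≤ y i then wp else wm) * (1 - 1 / n)
         else -(if 0 ≤ y i then wp else wm) / n)) ^ 2
        = p i * Υ + 2 * (p i * ((if 0 ≤ y i then wp else wm) * y i))
          + (p i * (if 0 ≤ y i then wp else wm)^2) * (1 - 1/(n:ℝ)) := by
      intro i
      rw [key i (if 0 ≤ y i then wp else wm)]
      ring
    rw [Finset.sum_congr rfl (fun i _ => this i), Finset.sum_add_distrib,
      Finset.sum_add_distrib, ← Finset.sum_mul, ← Finset.mul_sum, ← Finset.sum_mul, hp1]
    ring
  rw [step1]
  -- half-Δ identities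
  have hfilter : (Finset.univ.filter (fun i : Fin n => ¬ 0 ≤ y i))
      = (Finset.univ.filter (fun i : Fin n => y i < 0)) := by
    simp [not_le]
  have esum := Finset.sum_filter_add_sum_filter_not Finset.univ (fun i : Fin n => 0 ≤ y i) y
  have eabs := Finset.sum_filter_add_sum_filter_not Finset.univ (fun i : Fin n => 0 ≤ y i)
      (fun i => |y i|)
  rw [hfilter, hsum] at esum
  rw [hfilter] at eabs
  have eabs1 : ∑ i ∈ Finset.univ.filter (fun i : Fin n => 0 ≤ y i), |y i|
      = ∑ i ∈ Finset.univ.filter (fun i : Fin n => 0 ≤ y i), y i :=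
    Finset.sum_congr rfl (fun i hi => abs_of_nonneg (Finset.mem_filter.mp hi).2)
  have eabs2 : ∑ i ∈ Finset.univ.filter (fun i : Fin n => y i < 0), |y i|
      = ∑ i ∈ Finset.univ.filter (fun i : Fin n => y i < 0), -(y i) :=
    Finset.sum_congr rfl (fun i hi => abs_of_neg (Finset.mem_filter.mp hi).2)
  rw [eabs1, eabs2, Finset.sum_neg_distrib] at eabs
  have hSp : ∑ i ∈ Finset.univ.filter (fun i : Fin n => 0 ≤ y i), y i = Δ / 2 := by
    rw [hΔ, ← eabs]; linarith
  have hSm : ∑ i ∈ Finset.univ.filter (fun i : Fin n => y i < 0), y i = -(Δ / 2) := by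
    rw [hΔ, ← eabs]; linarith
  -- bound the cross term
  have crossbound : (∑ i, p i * ((if 0 ≤ y i then wp else wm) * y i))
      ≤ a * wp * (Δ/2) - b * wm * (Δ/2) := by
    have hsplit := Finset.sum_filter_add_sum_filter_not Finset.univ (fun i : Fin n => 0 ≤ y i)
        (fun i => p i * ((if 0 ≤ y i then wp else wm) * y i))
    rw [hfilter] at hsplit
    rw [← hsplit]
    have bp : ∑ i ∈ Finset.univ.filter (fun i : Fin n => 0 ≤ y i),
        p i * ((if 0 ≤ y i then wp else wm) * y i) ≤ a * wp * (Δ/2) := by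
      rw [← hSp, Finset.mul_sum]
      refine Finset.sum_le_sum (fun i hi => ?_)
      have hyi : 0 ≤ y i := (Finset.mem_filter.mp hi).2
      rw [if_pos hyi]
      have hpa : p i ≤ a := Finset.le_sup' p hi
      have hyn : 0 ≤ wp * y i := mul_nonneg hwp0.le hyi
      calc p i * (wp * y i) ≤ a * (wp * y i) := mul_le_mul_of_nonneg_right hpa hyn
        _ = a * wp * y i := by ring
    have bm : ∑ i ∈ Finset.univ.filter (fun i : Fin n => y i < 0),
        p i * ((if 0 ≤ y i then wp else wm) * y i) ≤ -(b * wm * (Δ/2)) := by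
      have : -(b * wm * (Δ/2)) = b * wm * ∑ i ∈ Finset.univ.filter
          (fun i : Fin n => y i < 0), y i := by rw [hSm]; ring
      rw [this, Finset.mul_sum]
      refine Finset.sum_le_sum (fun i hi => ?_)
      have hyi : y i < 0 := (Finset.mem_filter.mp hi).2
      rw [if_neg (not_le.mpr hyi)]
      have hpb : b ≤ p i := Finset.inf'_le p hi
      have hyn : wm * y i ≤ 0 := mul_nonpos_of_nonneg_of_nonpos hwm0.le hyi.le
      calc p i * (wm * y i) ≤ b * (wm * y i) := mul_le_mul_of_nonpos_right hpb hyn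
        _ = b * wm * y i := by ring
    linarith
  -- bound the variance term
  have varbound : (∑ i, p i * (if 0 ≤ y i then wp else wm)^2) * (1 - 1/(n:ℝ))
      ≤ 4 * wm ^ 2 := by
    have h1 : (∑ i, p i * (if 0 ≤ y i then wp else wm)^2) ≤ wm^2 := by
      calc (∑ i, p i * (if 0 ≤ y i then wp else wm)^2)
          ≤ ∑ i, p i * wm^2 := by
            refine Finset.sum_le_sum (fun i _ => ?_)
            refine mul_le_mul_of_nonneg_left ?_ (hp0 i)
            by_cases h : 0 ≤ y i
            · rw [if_pos h]; exact pow_le_pow_left₀ hwp0.le hw 2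
            · rw [if_neg h]
        _ = wm^2 := by rw [← Finset.sum_mul, hp1, one_mul]
    have h2 : (0:ℝ) ≤ ∑ i, p i * (if 0 ≤ y i then wp else wm)^2 := by
      refine Finset.sum_nonneg (fun i _ => mul_nonneg (hp0 i) (sq_nonneg _))
    have h3 : (0:ℝ) ≤ 1 - 1/(n:ℝ) := by
      have : 1/(n:ℝ) ≤ 1 := by
        rw [div_le_one hNpos]; exact hN1
      linarith
    have h4 : (1:ℝ) - 1/(n:ℝ) ≤ 1 := by
      have : (0:ℝ) ≤ 1/(n:ℝ) := by positivity
      linarith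
    nlinarith [sq_nonneg wm]
  nlinarith [crossbound, varbound]
end
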